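/- Let G be an (n,d,λ)-graph and let U ⊆ V(G). Let X₁ = {v ∈ U : deg_U(v) ≥ 2d|U|/n}. Then |X₁| ≤ (λn/d)²/|U|. -/

import Mathlib

open Finset

namespace NDL

variable {V : Type*} [Fintype V] [DecidableEq V]

/-- Number of ordered pairs `(a,b) ∈ A × B` with `ab` an edge (edges inside `A ∩ B`
are counted twice). -/
def epairs (G : SimpleGraph V) [DecidableRel G.Adj] (A B : Finset V) : ℕ :=
  ((A ×ˢ B).filter fun p => G.Adj p.1 p.2).card

/-- `G` is an `(n,d,λ)`-graph: an `n`-vertex `d`-regular graph whose adjacency matrix has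
one eigenvalue equal to `d` and all remaining eigenvalues at most `lam` in absolute value. -/
def IsNDL {n : ℕ} (G : SimpleGraph (Fin n)) [DecidableRel G.Adj] (d : ℕ) (lam : ℝ) : Prop :=
  G.IsRegularOfDegree d ∧
  ∃ (hA : Matrix.IsHermitian (G.adjMatrix ℝ)) (i₀ : Fin n),
    hA.eigenvalues i₀ = d ∧ ∀ i, i ≠ i₀ → |hA.eigenvalues i| ≤ lam

/-- The copies of `K_t` of `G` lying inside the vertex set `U`. -/
def KtOn (G : SimpleGraph V) [DecidableRel G.Adj] (t : ℕ) (U : Finset V) :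
    Finset (Finset V) :=
  (G.cliqueFinset t).filter (· ⊆ U)

/-- The value of a fractional `K_t`-matching in `G[U]`. -/
noncomputable def matchVal (G : SimpleGraph V) [DecidableRel G.Adj] (t : ℕ) (U : Finset V)
    (f : Finset V → ℝ) : ℝ :=
  ∑ T ∈ KtOn G t U, f T

/-- `f` is a fractional `K_t`-matching of the weighted graph `(G[U], w)`. -/
def IsFracMatching (G : SimpleGraph V) [DecidableRel G.Adj] (t : ℕ) (w : V → V → ℝ)
    (U : Finset V) (f : Finset V → ℝ) : Prop :=
  (∀ T, 0 ≤ f T) ∧ (∀ T, T ∉ KtOn G t U → f T = 0) ∧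
  (∀ v ∈ U, ∑ T ∈ (KtOn G t U).filter (v ∈ ·), f T ≤ 1) ∧
  (∀ u ∈ U, ∀ v ∈ U, G.Adj u v →
    ∑ T ∈ (KtOn G t U).filter (fun T => u ∈ T ∧ v ∈ T), f T ≤ w u v)

/-- `f` is a fractional `K_t`-factor of the weighted graph `(G, w)`. -/
def IsFracFactor (G : SimpleGraph V) [DecidableRel G.Adj] (t : ℕ) (w : V → V → ℝ)
    (f : Finset V → ℝ) : Prop :=
  IsFracMatching G t w Finset.univ f ∧
  ∀ v, ∑ T ∈ (KtOn G t Finset.univ).filter (v ∈ ·), f T = 1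

/-- `∑_{uv ∈ binom(U,2)} h(uv)` for a symmetric function `h`. -/
noncomputable def pairSum (U : Finset V) (h : V → V → ℝ) : ℝ :=
  (∑ u ∈ U, ∑ v ∈ U.erase u, h u v) / 2

/-- `∑_{uv ∈ E(G[U])} h(uv) * w(uv)` for symmetric functions `h`, `w`. -/
noncomputable def edgeWSum (G : SimpleGraph V) [DecidableRel G.Adj] (U : Finset V)
    (h w : V → V → ℝ) : ℝ :=
  (∑ u ∈ U, ∑ v ∈ (U.erase u).filter (G.Adj u), h u v * w u v) / 2

/-- Property `P(t, D, D', n)` of a graph `H`. -/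
def PropertyP (H : SimpleGraph V) [DecidableRel H.Adj] (t D : ℕ) (D' : ℝ) (n : ℕ) : Prop :=
  ∀ U : Finset V, (n : ℝ) - D ≤ U.card →
    ∀ U₀ ⊆ U, (U₀.card : ℝ) = (D : ℝ) / t →
      ∃ F : Finset (Finset V),
        D' / ((t : ℝ) - 1) ≤ F.card ∧
        (∀ T ∈ F, H.IsNClique t T ∧ T ⊆ U ∧ (T ∩ U₀).card = 1) ∧
        (∀ T ∈ F, ∀ T' ∈ F, T ≠ T' → T ∩ T' ⊆ U₀)

end NDL

/-!
Expand the indicator vectors `1_X`, `1_U` in an orthonormal eigenbasis of the adjacency matrix.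
When `λ < d` the eigenvector of `d` is parallel to the all-ones vector and contributes
`d|X||U|/n` to `e(X,U) = ⟪1_X, A 1_U⟫`; by Cauchy–Schwarz the other eigenvalues contribute at
most `λ√(|X||U|)` (expander mixing lemma). Every vertex of `X` sends at least `2d|U|/n` edges to
`U`, so `d|X||U|/n ≤ λ√(|X||U|)`, i.e. `|X||U| ≤ (λn/d)²`. When `λ ≥ d` the same inequality
follows from `|X||U| ≤ n²`.
-/

open RealInnerProductSpace

namespace OrthonormalBasis

variable {ι E : Type*} [Fintype ι] [NormedAddCommGroup E] [InnerProductSpace ℝ E]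
  (b : OrthonormalBasis ι ℝ E)

theorem sum_abs_inner_mul_abs_inner_le (x y : E) :
    ∑ i, |⟪b i, x⟫| * |⟪b i, y⟫| ≤ ‖x‖ * ‖y‖ := by
  calc ∑ i, |⟪b i, x⟫| * |⟪b i, y⟫|
      ≤ √(∑ i, |⟪b i, x⟫| ^ 2) * √(∑ i, |⟪b i, y⟫| ^ 2) := Real.sum_mul_le_sqrt_mul_sqrt _ _ _
    _ = ‖x‖ * ‖y‖ := by
      simp only [sq_abs, b.sum_sq_inner_right, Real.sqrt_sq (norm_nonneg _)]

theorem inner_map_eq_sum_of_apply_eq_smul {T : E →ₗ[ℝ] E} {μ : ι → ℝ}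
    (hT : ∀ i, T (b i) = μ i • b i) (x y : E) :
    ⟪x, T y⟫ = ∑ i, μ i * (⟪b i, x⟫ * ⟪b i, y⟫) := by
  conv_lhs => rw [← b.sum_repr' y]
  simp only [map_sum, map_smul, hT, inner_sum, real_inner_smul_right, real_inner_comm x]
  exact sum_congr rfl fun i _ => by ring

theorem abs_inner_map_sub_le {T : E →ₗ[ℝ] E} {μ : ι → ℝ} (hT : ∀ i, T (b i) = μ i • b i)
    {i₀ : ι} {lam : ℝ} (hlam : 0 ≤ lam) (hμ : ∀ i, i ≠ i₀ → |μ i| ≤ lam) (x y : E) :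
    |⟪x, T y⟫ - μ i₀ * (⟪b i₀, x⟫ * ⟪b i₀, y⟫)| ≤ lam * (‖x‖ * ‖y‖) := by
  classical
  rw [b.inner_map_eq_sum_of_apply_eq_smul hT, ← add_sum_erase _ _ (mem_univ i₀),
    add_sub_cancel_left]
  calc |∑ i ∈ univ.erase i₀, μ i * (⟪b i, x⟫ * ⟪b i, y⟫)|
      ≤ ∑ i ∈ univ.erase i₀, lam * (|⟪b i, x⟫| * |⟪b i, y⟫|) := by
        refine (abs_sum_le_sum_abs _ _).trans (sum_le_sum fun i hi => ?_)
        rw [abs_mul, abs_mul]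
        exact mul_le_mul_of_nonneg_right (hμ i (ne_of_mem_erase hi)) (by positivity)
    _ ≤ ∑ i, lam * (|⟪b i, x⟫| * |⟪b i, y⟫|) :=
        sum_le_sum_of_subset_of_nonneg (erase_subset _ _) fun _ _ _ => by positivity
    _ ≤ lam * (‖x‖ * ‖y‖) := by
        rw [← mul_sum]
        exact mul_le_mul_of_nonneg_left (b.sum_abs_inner_mul_abs_inner_le x y) hlam

end OrthonormalBasis

section IndicatorVec

variable {ι : Type*} [Fintype ι] [DecidableEq ι]

noncomputable def indicatorVec (S : Finset ι) : EuclideanSpace ℝ ι :=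
  WithLp.toLp 2 fun v => if v ∈ S then 1 else 0

theorem inner_indicatorVec (S : Finset ι) (z : EuclideanSpace ℝ ι) :
    ⟪indicatorVec S, z⟫ = ∑ v ∈ S, z v := by
  simp [PiLp.inner_apply, indicatorVec, sum_ite_mem]

theorem inner_indicatorVec_indicatorVec (S T : Finset ι) :
    ⟪indicatorVec S, indicatorVec T⟫ = #(S ∩ T) := by
  rw [inner_indicatorVec]
  simp [indicatorVec]

theorem norm_indicatorVec (S : Finset ι) : ‖indicatorVec S‖ = √(#S : ℝ) := by
  rw [norm_eq_sqrt_real_inner, inner_indicatorVec_indicatorVec, inter_self]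

end IndicatorVec

theorem Matrix.IsHermitian.toEuclideanLin_eigenvectorBasis {ι : Type*} [Fintype ι]
    [DecidableEq ι] {A : Matrix ι ι ℝ} (hA : A.IsHermitian) (i : ι) :
    toEuclideanLin A (hA.eigenvectorBasis i) = hA.eigenvalues i • hA.eigenvectorBasis i :=
  congrArg (WithLp.toLp 2) (hA.mulVec_eigenvectorBasis i)

namespace SimpleGraph

variable {V : Type*} [Fintype V] [DecidableEq V] (G : SimpleGraph V) [DecidableRel G.Adj]

theorem toEuclideanLin_adjMatrix_apply (x : EuclideanSpace ℝ V) (v : V) :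
    Matrix.toEuclideanLin (G.adjMatrix ℝ) x v = ∑ w ∈ G.neighborFinset v, x w :=
  G.adjMatrix_mulVec_apply v _

theorem inner_indicatorVec_toEuclideanLin_adjMatrix (A B : Finset V) :
    ⟪indicatorVec A, Matrix.toEuclideanLin (G.adjMatrix ℝ) (indicatorVec B)⟫ =
      ∑ v ∈ A, (#(G.neighborFinset v ∩ B) : ℝ) := by
  rw [inner_indicatorVec]
  refine sum_congr rfl fun v _ => ?_
  rw [toEuclideanLin_adjMatrix_apply]
  simp [indicatorVec]

variable {G}

theorem IsRegularOfDegree.toEuclideanLin_adjMatrix_indicatorVec_univ {d : ℕ}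
    (hreg : G.IsRegularOfDegree d) :
    Matrix.toEuclideanLin (G.adjMatrix ℝ) (indicatorVec univ) = (d : ℝ) • indicatorVec univ := by
  ext v
  simp [indicatorVec, hreg v]

theorem IsRegularOfDegree.inner_eigenvectorBasis_indicatorVec_univ_eq_zero {d : ℕ}
    (hreg : G.IsRegularOfDegree d) (hA : (G.adjMatrix ℝ).IsHermitian) {i : V}
    (hi : hA.eigenvalues i ≠ d) : ⟪hA.eigenvectorBasis i, indicatorVec univ⟫ = 0 := by
  have hsymm := Matrix.isSymmetric_toEuclideanLin_iff.mpr hA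
  have h := hsymm (hA.eigenvectorBasis i) (indicatorVec univ)
  rw [hA.toEuclideanLin_eigenvectorBasis, hreg.toEuclideanLin_adjMatrix_indicatorVec_univ,
    real_inner_smul_left, real_inner_smul_right] at h
  exact (mul_eq_mul_right_iff.mp h).resolve_left hi

end SimpleGraph

namespace NDL

variable {n d : ℕ} {G : SimpleGraph (Fin n)} [DecidableRel G.Adj] {lam : ℝ}

-- The eigenvalues are indexed by the vertices, so a neighbour of `i₀` is an index other than `i₀`.
theorem IsNDL.lam_nonneg (hG : IsNDL G d lam) (hd : 0 < d) : 0 ≤ lam := by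
  obtain ⟨hreg, hA, i₀, -, hμ⟩ := hG
  obtain ⟨w, hw⟩ := (G.degree_pos_iff_exists_adj i₀).mp ((hreg i₀).symm ▸ hd)
  exact (abs_nonneg _).trans (hμ w (G.ne_of_adj hw).symm)

theorem IsNDL.abs_sum_card_neighborFinset_inter_sub_le (hG : IsNDL G d lam) (hlam : 0 ≤ lam)
    (hlt : lam < d) (A B : Finset (Fin n)) :
    |∑ v ∈ A, (#(G.neighborFinset v ∩ B) : ℝ) - d * #A * #B / n| ≤ lam * √(#A * #B) := by
  obtain ⟨hreg, hA, i₀, hμ₀, hμ⟩ := hG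
  set b := hA.eigenvectorBasis
  have hperp : ∀ i, i ≠ i₀ → ⟪b i, indicatorVec univ⟫ = 0 := fun i hi =>
    hreg.inner_eigenvectorBasis_indicatorVec_univ_eq_zero hA
      (((le_abs_self _).trans (hμ i hi)).trans_lt hlt).ne
  have hone : ∀ z, ⟪indicatorVec univ, z⟫ = ⟪b i₀, indicatorVec univ⟫ * ⟪b i₀, z⟫ := fun z => by
    rw [← b.sum_inner_mul_inner, sum_eq_single i₀
      (fun i _ hi => by rw [real_inner_comm, hperp i hi, zero_mul]) (by simp), real_inner_comm]
  have hAcard := hone (indicatorVec A)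
  have hBcard := hone (indicatorVec B)
  have hncard := hone (indicatorVec univ)
  simp only [inner_indicatorVec_indicatorVec, univ_inter, card_univ, Fintype.card_fin]
    at hAcard hBcard hncard
  have hn : (n : ℝ) ≠ 0 := Nat.cast_ne_zero.mpr i₀.pos.ne'
  have htop : hA.eigenvalues i₀ * (⟪b i₀, indicatorVec A⟫ * ⟪b i₀, indicatorVec B⟫) =
      d * #A * #B / n := by
    rw [hμ₀, eq_div_iff hn, hAcard, hBcard, hncard]
    ring
  have hmix := b.abs_inner_map_sub_le hA.toEuclideanLin_eigenvectorBasis hlam hμ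
    (indicatorVec A) (indicatorVec B)
  rwa [htop, G.inner_indicatorVec_toEuclideanLin_adjMatrix, norm_indicatorVec, norm_indicatorVec,
    ← Real.sqrt_mul (Nat.cast_nonneg _)] at hmix

end NDL

theorem le_sq_div_of_mul_le_mul_sqrt {s c lam : ℝ} (hs : 0 ≤ s) (hc : 0 < c)
    (h : c * s ≤ lam * √s) : s ≤ (lam / c) ^ 2 := by
  rcases hs.eq_or_lt with rfl | hs
  · positivity
  have hsqrt : 0 < √s := Real.sqrt_pos.mpr hs
  have hcs : c * √s * √s ≤ lam * √s := by rwa [mul_assoc, Real.mul_self_sqrt hs.le]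
  have hsqrt_le : √s ≤ lam / c := by
    rw [le_div_iff₀' hc]
    exact le_of_mul_le_mul_right hcs hsqrt
  calc s = √s ^ 2 := (Real.sq_sqrt hs.le).symm
    _ ≤ (lam / c) ^ 2 := pow_le_pow_left₀ hsqrt.le hsqrt_le 2

theorem div_mul_le_mul_sqrt_of_le_sq {s m c lam : ℝ} (hs : 0 ≤ s) (hm : 0 < m) (hsm : s ≤ m ^ 2)
    (hc : 0 ≤ c) (hcl : c ≤ lam) : c / m * s ≤ lam * √s := by
  have hsqrt : √s ≤ m := (Real.sqrt_le_left hm.le).mpr hsm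
  calc c / m * s = c / m * √s * √s := by rw [mul_assoc, Real.mul_self_sqrt hs]
    _ ≤ c / m * m * √s := by gcongr
    _ ≤ lam * √s := by rw [div_mul_cancel₀ _ hm.ne']; gcongr

/-- Vertices of `U` with at least `2d|U|/n` neighbours in `U` are few. -/
theorem stmt17 {n d : ℕ} (G : SimpleGraph (Fin n)) [DecidableRel G.Adj] (lam : ℝ)
    (hG : NDL.IsNDL G d lam) (hd : 0 < d) (U : Finset (Fin n)) :
    (((U.filter fun v =>
        2 * (d : ℝ) * U.card / n ≤ ((G.neighborFinset v ∩ U).card : ℝ)).card : ℝ)) ≤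
      (lam * n / d) ^ 2 / U.card := by
  set X := U.filter fun v => 2 * (d : ℝ) * #U / n ≤ (#(G.neighborFinset v ∩ U) : ℝ)
  obtain rfl | hU := U.eq_empty_or_nonempty
  · simp [X]
  have hn : (0 : ℝ) < n := Nat.cast_pos.mpr hU.choose.pos
  have hd' : (0 : ℝ) < d := Nat.cast_pos.mpr hd
  have hkey : d / n * (#X * #U) ≤ lam * √(#X * #U) := by
    rcases lt_or_ge lam d with hlt | hle
    · have hmix := (abs_le.mp
        (hG.abs_sum_card_neighborFinset_inter_sub_le (hG.lam_nonneg hd) hlt X U)).2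
      have hdeg : #X * (2 * d * #U / n) ≤ ∑ v ∈ X, (#(G.neighborFinset v ∩ U) : ℝ) := by
        simpa using card_nsmul_le_sum X _ _ fun v hv => (mem_filter.mp hv).2
      calc (d / n * (#X * #U) : ℝ) = #X * (2 * d * #U / n) - d * #X * #U / n := by ring
        _ ≤ lam * √(#X * #U) := by linarith
    · have hX : #X ≤ n := (card_le_univ X).trans_eq (Fintype.card_fin n)
      have hU' : #U ≤ n := (card_le_univ U).trans_eq (Fintype.card_fin n)
      have hXU : (#X * #U : ℝ) ≤ n ^ 2 := by rw [sq]; gcongr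
      exact div_mul_le_mul_sqrt_of_le_sq (by positivity) hn hXU hd'.le hle
  have hsq := le_sq_div_of_mul_le_mul_sqrt (by positivity) (by positivity) hkey
  rw [le_div_iff₀ (by exact_mod_cast hU.card_pos)]
  calc _ ≤ (lam / (d / n)) ^ 2 := hsq
    _ = (lam * n / d) ^ 2 := by rw [div_div_eq_mul_div]
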